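/- Let k ≥ 3 be an odd integer and let n > 2k + 1. Let G be a connected nearly k-regular graph on n vertices, and let u be the unique vertex of G with degree k − 1. If the set of neighbors of u induces a complete subgraph of G, then G contains a path on 2k + 3 vertices as a subgraph. -/

import Mathlib

open SimpleGraph

/-- `F` is contained in `G` as a subgraph (there is an injective map preserving adjacency). -/
def ContainsCopy {α β : Type*} (F : SimpleGraph α) (G : SimpleGraph β) : Prop :=
  ∃ f : α ↪ β, ∀ a b, F.Adj a b → G.Adj (f a) (f b)

/-- The join of two graphs: disjoint union plus all edges between the two parts. -/
def graphJoin {α β : Type*} (G : SimpleGraph α) (H : SimpleGraph β) :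
    SimpleGraph (α ⊕ β) where
  Adj x y :=
    match x, y with
    | Sum.inl a, Sum.inl b => G.Adj a b
    | Sum.inr a, Sum.inr b => H.Adj a b
    | Sum.inl _, Sum.inr _ => True
    | Sum.inr _, Sum.inl _ => True
  symm := by
    refine ⟨?_⟩
    rintro (a | a) (b | b) h
    · exact G.adj_symm h
    · trivial
    · trivial
    · exact H.adj_symm h
  loopless := by
    refine ⟨?_⟩
    rintro (a | a) h
    · exact G.irrefl h
    · exact H.irrefl h

/-- The fan `H_ℓ = K_1 ∨ P_ℓ`. -/
def fan (ℓ : ℕ) : SimpleGraph (Fin 1 ⊕ Fin ℓ) :=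
  graphJoin (⊤ : SimpleGraph (Fin 1)) (pathGraph ℓ)

/-- The degree of a vertex. -/
noncomputable def gdeg {V : Type*} (G : SimpleGraph V) (v : V) : ℕ :=
  (G.neighborSet v).ncard

/-- `G` is `k`-regular. -/
def IsKRegular {V : Type*} (G : SimpleGraph V) (k : ℕ) : Prop :=
  ∀ v, gdeg G v = k

/-- `G` is nearly `k`-regular: all degrees are `k` except one vertex of degree `k-1`. -/
def IsNearlyKRegular {V : Type*} (G : SimpleGraph V) (k : ℕ) : Prop :=
  ∃ u, gdeg G u = k - 1 ∧ ∀ v, v ≠ u → gdeg G v = k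

/-- The adjacency matrix of `G` over `ℝ`. -/
noncomputable def adjMat {V : Type*} (G : SimpleGraph V) : Matrix V V ℝ :=
  letI := Classical.decRel G.Adj
  G.adjMatrix ℝ

/-- The spectral radius of a graph: the largest eigenvalue of its adjacency matrix. -/
noncomputable def specRad {V : Type*} [Fintype V] (G : SimpleGraph V) : ℝ :=
  sSup {μ : ℝ | Module.End.HasEigenvalue (adjMat G).mulVecLin μ}

/-- `SPEX n F`: the `F`-free graphs on `n` vertices of maximum spectral radius. -/
def SPEX (n : ℕ) {α : Type*} (F : SimpleGraph α) : Set (SimpleGraph (Fin n)) :=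
  {G | ¬ ContainsCopy F G ∧
    ∀ H : SimpleGraph (Fin n), ¬ ContainsCopy F H → specRad H ≤ specRad G}

/-!
Write `N[u]` for the closed neighbourhood of `u`. It is a clique on `k` vertices, and each of its
vertices other than `u` has exactly one neighbour outside it. The degree sum `k n - 1` is even, so
`n` is odd and `n ≥ 2k + 3`. Suppose a longest path `ρ` has at most `2k + 2` vertices. Since `G` is
connected and `ρ` does not span it, the ends of `ρ` and of all its Pósa rotations have their
neighbours on `ρ`, and no rotation closes `ρ` into a cycle.

If `ρ` misses a vertex of `N[u]`, it misses all of `N[u]`; detours through the clique then force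
one vertex of `ρ` to be the outside neighbour of all of `N[u] \ {u}`, giving it degree `k + 1`.
If `ρ` contains `N[u]`, rotate it so that its ends lie outside `N[u]`: the ends have `2k` neighbours
on fewer than `2k + 2` edge slots, and counting the outside neighbours of `N[u] \ {u}` that `ρ`
exhibits (where it enters or leaves `N[u]`, and where an end sees into a run of `N[u]`) leaves no
room. The rotation is impossible only when `N[u]` is an initial block of `ρ`; then the
neighbourhoods of the vertices after the block are forced, and `ρ (k + 1)` gets degree `k + 1`.
-/

open Finset

namespace Finset

lemma card_filter_and_not_add_card_filter_and {α : Type*} (s : Finset α) (p q : α → Prop)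
    [DecidablePred p] [DecidablePred q] :
    #{x ∈ s | p x ∧ ¬ q x} + #{x ∈ s | p x ∧ q x} = #{x ∈ s | p x} := by
  rw [← filter_filter, ← filter_filter, add_comm]
  exact card_filter_add_card_filter_not _

lemma card_filter_range_eq_of_not_zero (c : ℕ → Prop) [DecidablePred c] {M : ℕ} (h0 : ¬ c 0) :
    #{p ∈ range M | c p} = #{i ∈ range (M - 1) | c (i + 1)} := by
  refine card_nbij' (· - 1) (· + 1) (fun p hp => ?_) (fun i hi => ?_) (fun p hp => ?_)
    fun i _ => rfl
  · simp only [coe_filter, mem_range, Set.mem_ofPred_eq] at hp ⊢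
    have : p ≠ 0 := by rintro rfl; exact h0 hp.2
    exact ⟨by omega, by rw [Nat.sub_add_cancel (by omega)]; exact hp.2⟩
  · simp only [coe_filter, mem_range, Set.mem_ofPred_eq] at hi ⊢
    exact ⟨by omega, hi.2⟩
  · simp only [coe_filter, mem_range, Set.mem_ofPred_eq] at hp
    have : p ≠ 0 := by rintro rfl; exact h0 hp.2
    exact Nat.sub_add_cancel (Nat.pos_of_ne_zero this)

lemma card_filter_range_eq_of_not_last (c : ℕ → Prop) [DecidablePred c] {M : ℕ}
    (hL : ¬ c (M - 1)) : #{p ∈ range M | c p} = #{i ∈ range (M - 1) | c i} := by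
  congr 1
  ext p
  simp only [mem_filter, mem_range]
  exact ⟨fun h => ⟨by by_contra hp; exact hL (by rw [show M - 1 = p by omega]; exact h.2), h.2⟩,
    fun h => ⟨by omega, h.2⟩⟩

lemma forall_lt_and_forall_le_not_of_card_filter (b : ℕ → Prop) [DecidablePred b] {M k : ℕ}
    (hdown : ∀ j < M, b j → b (j - 1)) (hk : #{p ∈ range M | b p} = k) :
    (∀ i < k, b i) ∧ ∀ i, k ≤ i → i < M → ¬ b i := by
  have hsub : ∀ d, ∀ i < M, b i → b (i - d) := by
    intro d
    induction d with
    | zero => exact fun i _ h => h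
    | succ d ih =>
      intro i hi h
      simpa [Nat.sub_sub] using hdown (i - d) (by omega) (ih i hi h)
  refine ⟨fun i hi => by_contra fun hbi => ?_, fun i hki hi hbi => ?_⟩
  · have : {p ∈ range M | b p} ⊆ range i := fun p hp => by
      simp only [mem_filter, mem_range] at hp ⊢
      by_contra hpi
      exact hbi (by simpa [show p - (p - i) = i by omega] using hsub (p - i) p hp.1 hp.2)
    have := card_le_card this
    simp only [card_range] at this
    omega
  · have : range (i + 1) ⊆ {p ∈ range M | b p} := fun p hp => by
      simp only [mem_filter, mem_range] at hp ⊢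
      exact ⟨by omega, by simpa [show i - (i - p) = p by omega] using hsub (i - p) i hi hbi⟩
    have := card_le_card this
    simp only [card_range] at this
    omega

end Finset

namespace Nat

lemma exists_and_not_sub_one (b : ℕ → Prop) {M : ℕ} (h0 : ¬ b 0) (h : ∃ p < M, b p) :
    ∃ p < M, b p ∧ ¬ b (p - 1) := by
  classical
  have hp := Nat.find_spec h
  refine ⟨Nat.find h, hp.1, hp.2, fun hb => ?_⟩
  have : Nat.find h ≠ 0 := by intro h'; rw [h'] at hp; exact h0 hp.2
  exact Nat.find_min h (by omega : Nat.find h - 1 < Nat.find h) ⟨by omega, hb⟩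

lemma exists_last_lt_first (X Y : ℕ → Prop) {q : ℕ} (hX : X 0) (hY : Y q)
    (hXY : ∀ i, X i → ¬ Y i) :
    ∃ a b, a < b ∧ b ≤ q ∧ X a ∧ Y b ∧ ∀ i, a < i → i < b → ¬ X i ∧ ¬ Y i := by
  classical
  have hex : ∃ b, Y b := ⟨q, hY⟩
  set b := Nat.find hex
  have hXa : X (Nat.findGreatest X b) := Nat.findGreatest_spec (Nat.zero_le _) hX
  have hab : Nat.findGreatest X b < b := lt_of_le_of_ne (Nat.findGreatest_le b) fun h =>
    hXY _ hXa (by rw [h]; exact Nat.find_spec hex)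
  exact ⟨_, b, hab, Nat.find_min' hex hY, hXa, Nat.find_spec hex, fun i h1 h2 =>
    ⟨Nat.findGreatest_is_greatest h1 h2.le, Nat.find_min hex h2⟩⟩

end Nat

lemma List.mem_iff_exists_getD {V : Type*} {l : List V} {x : V} (d : V) :
    x ∈ l ↔ ∃ i < l.length, l.getD i d = x := by
  rw [List.mem_iff_getElem]
  constructor <;> rintro ⟨i, hi, h⟩ <;> exact ⟨i, hi, by rwa [List.getD_eq_getElem _ _ hi] at *⟩

lemma Fintype.exists_forall_ne_of_lt_card {V : Type*} [Fintype V] (ρ : ℕ → V) {M : ℕ}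
    (hMV : M < Fintype.card V) : ∃ z, ∀ i < M, ρ i ≠ z := by
  classical
  by_contra! h
  have : (univ : Finset V) ⊆ (range M).image ρ := fun z _ => by
    obtain ⟨i, hi, rfl⟩ := h z
    exact mem_image_of_mem _ (mem_range.2 hi)
  have := (card_le_card this).trans card_image_le
  rw [card_univ, Finset.card_range] at this
  omega

namespace SimpleGraph

variable {V : Type*} {G : SimpleGraph V}

/-! ### Paths as sequences -/

structure IsPathSeq (G : SimpleGraph V) (m : ℕ) (f : ℕ → V) : Prop where
  inj : ∀ i < m, ∀ j < m, f i = f j → i = j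
  adj : ∀ i, i + 1 < m → G.Adj (f i) (f (i + 1))

def appendSeq (p : ℕ) (a b : ℕ → V) : ℕ → V := fun i => if i < p then a i else b (i - p)

lemma appendSeq_of_lt {p i : ℕ} {a b : ℕ → V} (h : i < p) : appendSeq p a b i = a i := if_pos h

lemma appendSeq_of_le {p i : ℕ} {a b : ℕ → V} (h : p ≤ i) : appendSeq p a b i = b (i - p) :=
  if_neg (Nat.not_lt.2 h)

/-- Pósa rotation: if `f 0` is adjacent to `f j`, reversing the segment before `f j` gives a path
on the same vertices. -/
def rotateSeq (f : ℕ → V) (j : ℕ) : ℕ → V := fun i => if i < j then f (j - 1 - i) else f i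

lemma rotateSeq_of_lt {f : ℕ → V} {i j : ℕ} (h : i < j) : rotateSeq f j i = f (j - 1 - i) :=
  if_pos h

lemma rotateSeq_of_le {f : ℕ → V} {i j : ℕ} (h : j ≤ i) : rotateSeq f j i = f i :=
  if_neg (Nat.not_lt.2 h)

lemma exists_rotateSeq_eq {f : ℕ → V} {i j M : ℕ} (hi : i < M) (hj : j ≤ M) :
    ∃ i' < M, rotateSeq f j i' = f i := by
  rcases Nat.lt_or_ge i j with h | h
  · exact ⟨j - 1 - i, by omega, by rw [rotateSeq_of_lt (by omega)]; congr 1; omega⟩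
  · exact ⟨i, hi, rotateSeq_of_le h⟩

namespace IsPathSeq

variable {m : ℕ} {f : ℕ → V}

lemma of_le (hf : G.IsPathSeq m f) {m' : ℕ} (h : m' ≤ m) : G.IsPathSeq m' f :=
  ⟨fun i hi j hj => hf.inj i (by omega) j (by omega), fun i hi => hf.adj i (by omega)⟩

lemma single (v : V) : G.IsPathSeq 1 fun _ => v :=
  ⟨fun i hi j hj _ => by omega, fun i hi => by omega⟩

lemma reverse (hf : G.IsPathSeq m f) : G.IsPathSeq m fun i => f (m - 1 - i) := by
  refine ⟨fun i hi j hj hij => ?_, fun i hi => ?_⟩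
  · have := hf.inj _ (by omega) _ (by omega) hij
    omega
  · have := hf.adj (m - 1 - (i + 1)) (by omega)
    rw [show m - 1 - (i + 1) + 1 = m - 1 - i by omega] at this
    exact this.symm

lemma adj_sub_one (hf : G.IsPathSeq m f) {p : ℕ} (hp : p < m) (hp0 : 0 < p) :
    G.Adj (f p) (f (p - 1)) := by
  simpa [Nat.sub_add_cancel hp0] using (hf.adj (p - 1) (by omega)).symm

lemma shift (hf : G.IsPathSeq m f) {s m' : ℕ} (h : s + m' ≤ m) :
    G.IsPathSeq m' fun i => f (s + i) := by
  refine ⟨fun i hi j hj hij => ?_, fun i hi => ?_⟩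
  · have := hf.inj _ (by omega) _ (by omega) hij
    omega
  · simpa only [← Nat.add_assoc] using hf.adj (s + i) (by omega)

lemma reverse_shift (hf : G.IsPathSeq m f) {t m' : ℕ} (ht : t < m) (h : m' ≤ t + 1) :
    G.IsPathSeq m' fun i => f (t - i) := by
  simpa using ((hf.of_le ht).reverse).of_le h

lemma append {p q : ℕ} {a b : ℕ → V} (ha : G.IsPathSeq p a) (hb : G.IsPathSeq q b)
    (hab : ∀ i < p, ∀ j < q, a i ≠ b j) (hseam : 0 < p → 0 < q → G.Adj (a (p - 1)) (b 0)) :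
    G.IsPathSeq (p + q) (appendSeq p a b) := by
  refine ⟨fun i hi j hj hij => ?_, fun i hi => ?_⟩
  · rcases lt_or_ge i p with h1 | h1 <;> rcases lt_or_ge j p with h2 | h2
    · rw [appendSeq_of_lt h1, appendSeq_of_lt h2] at hij
      exact ha.inj i h1 j h2 hij
    · rw [appendSeq_of_lt h1, appendSeq_of_le h2] at hij
      exact absurd hij (hab i h1 (j - p) (by omega))
    · rw [appendSeq_of_le h1, appendSeq_of_lt h2] at hij
      exact absurd hij.symm (hab j h2 (i - p) (by omega))
    · rw [appendSeq_of_le h1, appendSeq_of_le h2] at hij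
      have := hb.inj (i - p) (by omega) (j - p) (by omega) hij
      omega
  · rcases lt_or_ge (i + 1) p with h1 | h1
    · rw [appendSeq_of_lt (by omega), appendSeq_of_lt h1]
      exact ha.adj i h1
    rw [appendSeq_of_le h1]
    rcases lt_or_ge i p with h2 | h2
    · rw [appendSeq_of_lt h2, show i = p - 1 by omega, show p - 1 + 1 - p = 0 by omega]
      exact hseam (by omega) (by omega)
    · rw [appendSeq_of_le h2, show i + 1 - p = i - p + 1 by omega]
      exact hb.adj (i - p) (by omega)

lemma rotate (hf : G.IsPathSeq m f) {j : ℕ} (hj : j < m) (h : G.Adj (f 0) (f j)) :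
    G.IsPathSeq m (rotateSeq f j) := by
  refine ⟨fun a ha b hb hab => ?_, fun i hi => ?_⟩
  · rcases lt_or_ge a j with h1 | h1 <;> rcases lt_or_ge b j with h2 | h2 <;>
      simp only [rotateSeq_of_lt, rotateSeq_of_le, *] at hab <;>
      have := hf.inj _ (by omega) _ (by omega) hab <;> omega
  · rcases lt_or_ge (i + 1) j with h1 | h1
    · rw [rotateSeq_of_lt h1, rotateSeq_of_lt (by omega)]
      have := hf.adj (j - 1 - (i + 1)) (by omega)
      rw [show j - 1 - (i + 1) + 1 = j - 1 - i by omega] at this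
      exact this.symm
    rw [rotateSeq_of_le h1]
    rcases lt_or_ge i j with h2 | h2
    · rw [rotateSeq_of_lt h2, show j - 1 - i = 0 by omega, show i + 1 = j by omega]
      exact h
    · rw [rotateSeq_of_le h2]
      exact hf.adj i hi

lemma card_le [Fintype V] (hf : G.IsPathSeq m f) : m ≤ Fintype.card V := by
  classical
  calc m = #((range m).image f) := by
        rw [card_image_of_injOn fun i hi j hj => hf.inj i (by simpa using hi) j (by simpa using hj),
          card_range]
    _ ≤ Fintype.card V := card_le_univ _

lemma card_filter_mem_eq [DecidableEq V] (hf : G.IsPathSeq m f) {T : Finset V}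
    (hT : ∀ γ ∈ T, ∃ i < m, f i = γ) : #{i ∈ range m | f i ∈ T} = #T := by
  refine card_nbij f (fun i hi => (mem_filter.1 hi).2)
    (fun i hi j hj => hf.inj i (by simp_all) j (by simp_all)) fun γ hγ => ?_
  obtain ⟨i, hi, rfl⟩ := hT γ hγ
  exact ⟨i, by simpa [hi] using hγ, rfl⟩

lemma card_filter_mem_le [DecidableEq V] (hf : G.IsPathSeq m f) (T : Finset V) :
    #{i ∈ range m | f i ∈ T} ≤ #T :=
  card_le_card_of_injOn f (fun i hi => (mem_filter.1 hi).2) fun i hi j hj h =>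
    hf.inj i (by simp_all) j (by simp_all) h

lemma card_image_Icc [DecidableEq V] (hf : G.IsPathSeq m f) {a b : ℕ} (hb : b < m) :
    #((Icc a b).image f) = b + 1 - a := by
  rw [card_image_of_injOn fun i hi j hj => hf.inj i (by simp_all; omega) j (by simp_all; omega),
    Nat.card_Icc]

lemma containsCopy_pathGraph (hf : G.IsPathSeq m f) {ℓ : ℕ} (hℓ : ℓ ≤ m) :
    ContainsCopy (pathGraph ℓ) G := by
  refine ⟨⟨fun i => f i, fun i j hij => Fin.ext (hf.inj i (by omega) j (by omega) hij)⟩, ?_⟩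
  intro a b hab
  rcases (pathGraph_adj.1 hab) with h | h
  · change G.Adj (f a) (f b)
    rw [← h]
    exact hf.adj a (by omega)
  · change G.Adj (f a) (f b)
    rw [← h]
    exact (hf.adj b (by omega)).symm

end IsPathSeq

section Clique

lemma IsClique.isPathSeq_getD {T : Set V} (hT : G.IsClique T) {l : List V} (hl : l.Nodup)
    (hlT : ∀ x ∈ l, x ∈ T) (d : V) : G.IsPathSeq l.length fun i => l.getD i d := by
  refine ⟨fun i hi j hj hij => ?_, fun i hi => ?_⟩
  · rw [List.getD_eq_getElem _ _ hi, List.getD_eq_getElem _ _ hj] at hij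
    exact (hl.getElem_inj_iff).1 hij
  · rw [List.getD_eq_getElem _ _ (by omega), List.getD_eq_getElem _ _ hi]
    refine hT (hlT _ (List.getElem_mem _)) (hlT _ (List.getElem_mem _)) fun h => ?_
    have := (hl.getElem_inj_iff).1 h
    omega

variable [DecidableEq V] {T : Finset V}

lemma IsClique.exists_isPathSeq_head (hT : G.IsClique (T : Set V)) {a : V} (ha : a ∈ T) :
    ∃ e : ℕ → V, G.IsPathSeq #T e ∧ e 0 = a ∧ ∀ x, x ∈ T ↔ ∃ i < #T, e i = x := by
  set l := a :: (T.erase a).toList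
  have hmem : ∀ x, x ∈ l ↔ x ∈ T := fun x => by
    by_cases hx : x = a <;> simp [l, hx, ha]
  have hlen : l.length = #T := by simp [l, card_erase_add_one ha]
  refine ⟨fun i => l.getD i a, hlen ▸ hT.isPathSeq_getD ?_ (fun x hx => (hmem x).1 hx) a,
    rfl, fun x => ?_⟩
  · simpa [l] using (T.erase a).nodup_toList
  · rw [← hmem, ← hlen, List.mem_iff_exists_getD]

lemma IsClique.exists_isPathSeq (hT : G.IsClique (T : Set V)) {a b : V} (ha : a ∈ T)
    (hb : b ∈ T) (hab : a ≠ b) :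
    ∃ e : ℕ → V, G.IsPathSeq #T e ∧ e 0 = a ∧ e (#T - 1) = b ∧
      ∀ x, x ∈ T ↔ ∃ i < #T, e i = x := by
  set l := a :: (((T.erase a).erase b).toList ++ [b])
  have hmem : ∀ x, x ∈ l ↔ x ∈ T := fun x => by
    by_cases hx : x = a <;> by_cases hx' : x = b <;> simp [l, hx, hx', ha, hb]
  have hlen : l.length = #T := by
    simp only [l, List.length_cons, List.length_append, length_toList, List.length_nil, zero_add,
      card_erase_of_mem (mem_erase.2 ⟨hab.symm, hb⟩), card_erase_of_mem ha]
    have : 2 ≤ #T := one_lt_card.2 ⟨a, ha, b, hb, hab⟩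
    omega
  refine ⟨fun i => l.getD i a, hlen ▸ hT.isPathSeq_getD ?_ (fun x hx => (hmem x).1 hx) a,
    rfl, ?_, fun x => ?_⟩
  · simp +contextual [l, List.nodup_append, hab, ((T.erase a).erase b).nodup_toList]
  · simp [← hlen, l, List.getElem_append_right]
  · rw [← hmem, ← hlen, List.mem_iff_exists_getD]

end Clique

lemma Connected.exists_adj_mem_notMem (hconn : G.Connected) {S : Set V} {x y : V} (hx : x ∈ S)
    (hy : y ∉ S) : ∃ a ∈ S, ∃ b ∉ S, G.Adj a b := by
  obtain ⟨d, -, hd1, hd2⟩ := (hconn.preconnected x y).some.exists_boundary_dart S hx hy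
  exact ⟨_, hd1, _, hd2, d.adj⟩

lemma Connected.exists_isPathSeq (hconn : G.Connected) (x y : V) :
    ∃ (q : ℕ) (h : ℕ → V), G.IsPathSeq q h ∧ 0 < q ∧ h 0 = x ∧ h (q - 1) = y := by
  classical
  let p := (hconn.preconnected x y).some.bypass
  have hp : p.IsPath := Walk.bypass_isPath _
  refine ⟨p.length + 1, p.getVert, ⟨fun i hi j hj hij => ?_, fun i hi => ?_⟩, by omega,
    p.getVert_zero, by simp⟩
  · exact hp.getVert_injOn (by simp only [Set.mem_ofPred_eq]; omega)
      (by simp only [Set.mem_ofPred_eq]; omega) hij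
  · exact p.adj_getVert_succ (by omega)

/-! ### Longest paths -/

structure IsLongestPathSeq (G : SimpleGraph V) (M : ℕ) (ρ : ℕ → V) : Prop
    extends G.IsPathSeq M ρ where
  le : ∀ m f, G.IsPathSeq m f → m ≤ M

lemma exists_isLongestPathSeq [Fintype V] [Nonempty V] : ∃ M ρ, G.IsLongestPathSeq M ρ := by
  classical
  let P := fun m => ∃ f : ℕ → V, G.IsPathSeq m f
  have h1 : P 1 := ⟨fun _ => Classical.arbitrary V, IsPathSeq.single _⟩
  obtain ⟨ρ, hρ⟩ : P (Nat.findGreatest P (Fintype.card V)) :=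
    Nat.findGreatest_spec Fintype.card_pos h1
  exact ⟨_, ρ, hρ, fun m f hf => Nat.le_findGreatest hf.card_le ⟨f, hf⟩⟩

namespace IsLongestPathSeq

variable {M : ℕ} {ρ : ℕ → V}

lemma reverse (hρ : G.IsLongestPathSeq M ρ) : G.IsLongestPathSeq M fun i => ρ (M - 1 - i) :=
  ⟨hρ.toIsPathSeq.reverse, hρ.le⟩

lemma rotate (hρ : G.IsLongestPathSeq M ρ) {j : ℕ} (hj : j < M) (h : G.Adj (ρ 0) (ρ j)) :
    G.IsLongestPathSeq M (rotateSeq ρ j) :=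
  ⟨hρ.toIsPathSeq.rotate hj h, hρ.le⟩

/-- Attaching a path `q` that avoids `ρ` at `ρ t` and going along `ρ` in either direction
cannot beat `ρ`. -/
lemma detour (hρ : G.IsLongestPathSeq M ρ) {t L : ℕ} {q : ℕ → V} (ht : t < M)
    (hq : G.IsPathSeq L q) (hdisj : ∀ i < M, ∀ j < L, ρ i ≠ q j)
    (hadj : G.Adj (ρ t) (q 0)) : t + 1 + L ≤ M ∧ L ≤ t := by
  constructor
  · refine hρ.le _ _ ((hρ.of_le (by omega : t + 1 ≤ M)).append hq
      (fun i hi j hj => hdisj i (by omega) j hj) fun _ _ => by simpa using hadj)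
  · have := hρ.le _ _ ((hρ.reverse_shift (t := M - 1) (m' := M - t) (by omega) (by omega)).append
      hq (fun i hi j hj => hdisj _ (by omega) j hj) fun _ _ => by
        rwa [show M - 1 - (M - t - 1) = t by omega])
    omega

/-- A path `q` avoiding `ρ` and joining `ρ b` to `ρ a` with `a < b` cannot be longer than the
stretch of `ρ` that it bypasses. -/
lemma bridge (hρ : G.IsLongestPathSeq M ρ) {a b L : ℕ} {q : ℕ → V} (hab : a < b) (hb : b < M)
    (hq : G.IsPathSeq L q) (hL : 0 < L) (hdisj : ∀ i < M, ∀ j < L, ρ i ≠ q j)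
    (h1 : G.Adj (ρ b) (q 0)) (h2 : G.Adj (q (L - 1)) (ρ a)) : a + L + 1 ≤ b := by
  have hinner : G.IsPathSeq (L + (a + 1)) (appendSeq L q fun i => ρ (a - i)) :=
    hq.append (hρ.reverse_shift (by omega) le_rfl)
      (fun i hi j hj h => hdisj _ (by omega) i hi h.symm) fun _ _ => by simpa using h2
  have := hρ.le _ _ ((hρ.reverse_shift (t := M - 1) (m' := M - b) (by omega) (by omega)).append
    hinner (fun i hi j hj h => ?_) fun _ _ => ?_)
  · omega
  · rcases lt_or_ge j L with hj' | hj'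
    · rw [appendSeq_of_lt hj'] at h
      exact hdisj _ (by omega) j hj' h
    · rw [appendSeq_of_le hj'] at h
      have := hρ.inj _ (by omega) _ (by omega) h
      omega
  · rwa [appendSeq_of_lt hL, show M - 1 - (M - b - 1) = b by omega]

lemma exists_eq_of_adj_head (hρ : G.IsLongestPathSeq M ρ) {x : V} (h : G.Adj (ρ 0) x) :
    ∃ i < M, ρ i = x := by
  by_contra! hx
  have hM := hρ.le 1 _ (IsPathSeq.single x)
  have := hρ.detour hM (IsPathSeq.single x) (fun i hi _ _ => hx i hi) h
  omega

lemma exists_eq_of_adj_last (hρ : G.IsLongestPathSeq M ρ) {x : V} (h : G.Adj (ρ (M - 1)) x) :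
    ∃ i < M, ρ i = x := by
  by_contra! hx
  have hM := hρ.le 1 _ (IsPathSeq.single x)
  have := hρ.detour (t := M - 1) (by omega) (IsPathSeq.single x)
    (fun i hi _ _ => hx i hi) h
  omega

/-- `ρ (i + 1)` is an end of a Pósa rotation of `ρ`. -/
lemma exists_eq_of_adj_of_adj_last (hρ : G.IsLongestPathSeq M ρ) {i : ℕ} (hi : i + 1 < M)
    (h : G.Adj (ρ (M - 1)) (ρ i)) {x : V} (hx : G.Adj (ρ (i + 1)) x) : ∃ j < M, ρ j = x := by
  have hR := hρ.reverse.rotate (j := M - 1 - i) (by omega)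
    (by rwa [show M - 1 - (M - 1 - i) = i by omega, Nat.sub_zero])
  obtain ⟨j, hj, hjx⟩ := hR.exists_eq_of_adj_head (x := x) (by
    rwa [rotateSeq_of_lt (by omega), show M - 1 - (M - 1 - i - 1 - 0) = i + 1 by omega])
  unfold rotateSeq at hjx
  split_ifs at hjx
  · exact ⟨_, by omega, hjx⟩
  · exact ⟨_, by omega, hjx⟩

section Clique

variable [DecidableEq V] {T : Finset V}

lemma add_card_le_of_adj_isClique (hρ : G.IsLongestPathSeq M ρ) (hT : G.IsClique (T : Set V))
    (hdisj : ∀ i < M, ρ i ∉ T) {t : ℕ} (ht : t < M) {s : V} (hs : s ∈ T) (h : G.Adj (ρ t) s) :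
    t + 1 + #T ≤ M ∧ #T ≤ t := by
  obtain ⟨e, he, he0, heT⟩ := hT.exists_isPathSeq_head hs
  exact hρ.detour ht he (fun i hi j hj hij => hdisj i hi (hij ▸ (heT _).2 ⟨j, hj, rfl⟩))
    (he0 ▸ h)

/-- A shortest connection from `ρ` to `T` has no inner vertices, since a detour through them and
then through all of `T` would beat `ρ`. -/
lemma exists_adj_of_isClique (hρ : G.IsLongestPathSeq M ρ) (hconn : G.Connected)
    (hT : G.IsClique (T : Set V)) {s₀ : V} (hs₀ : s₀ ∈ T) (hdisj : ∀ i < M, ρ i ∉ T)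
    (hM : M < 2 * #T + 3) : ∃ t < M, ∃ s ∈ T, G.Adj (ρ t) s := by
  have hM1 := hρ.le 1 _ (IsPathSeq.single s₀)
  obtain ⟨q, h, hh, hq, hh0, hhq⟩ := hconn.exists_isPathSeq (ρ 0) s₀
  obtain ⟨a, b, hab, hbq, ⟨t, ht, hta⟩, hbT, hmid⟩ := Nat.exists_last_lt_first
    (fun i => ∃ t < M, ρ t = h i) (fun i => h i ∈ T) ⟨0, hM1, hh0.symm⟩ (hhq ▸ hs₀)
    fun i ⟨t, ht, hti⟩ hiT => hdisj t ht (hti ▸ hiT)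
  obtain ⟨e, he, he0, heT⟩ := hT.exists_isPathSeq_head hbT
  have hq' : G.IsPathSeq (b - a - 1 + #T) (appendSeq (b - a - 1) (fun i => h (a + 1 + i)) e) :=
    (hh.shift (by omega)).append he
      (fun i hi j hj hij =>
        (hmid (a + 1 + i) (by omega) (by omega)).2 (hij ▸ (heT _).2 ⟨j, hj, rfl⟩))
      fun _ _ => by
        rw [he0, show a + 1 + (b - a - 1 - 1) = b - 1 by omega]
        exact (hh.adj_sub_one (by omega) (by omega)).symm
  have hq0 : appendSeq (b - a - 1) (fun i => h (a + 1 + i)) e 0 = h (a + 1) := by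
    rcases Nat.eq_zero_or_pos (b - a - 1) with hr | hr
    · rw [appendSeq_of_le hr.le, Nat.zero_sub, he0, show b = a + 1 by omega]
    · rw [appendSeq_of_lt hr]
  have := hρ.detour ht hq' (fun i hi j hj hij => ?_) (by rw [hq0, hta]; exact hh.adj a (by omega))
  · refine ⟨t, ht, h b, hbT, ?_⟩
    rw [hta, show b = a + 1 by omega]
    exact hh.adj a (by omega)
  · rcases lt_or_ge j (b - a - 1) with hj' | hj'
    · rw [appendSeq_of_lt hj'] at hij
      exact (hmid (a + 1 + j) (by omega) (by omega)).1 ⟨i, hi, hij⟩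
    · rw [appendSeq_of_le hj'] at hij
      exact hdisj i hi (hij ▸ (heT _).2 ⟨_, by omega, rfl⟩)

end Clique

variable [Fintype V]

lemma not_adj_last_head (hρ : G.IsLongestPathSeq M ρ) (hconn : G.Connected)
    (hMV : M < Fintype.card V) : ¬ G.Adj (ρ (M - 1)) (ρ 0) := by
  intro hlast
  have hM := hρ.le 1 _ (IsPathSeq.single (ρ 0))
  obtain ⟨z, hz⟩ := Fintype.exists_forall_ne_of_lt_card ρ hMV
  obtain ⟨_, ⟨t, ht, rfl⟩, b, hb, hab⟩ := hconn.exists_adj_mem_notMem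
    (S := {v | ∃ i < M, ρ i = v}) ⟨0, hM, rfl⟩ (by simpa using hz)
  have hcyc : G.IsLongestPathSeq M (appendSeq (M - t) (fun i => ρ (t + i)) ρ) := by
    refine ⟨?_, hρ.le⟩
    convert (hρ.shift (s := t) (m' := M - t) (by omega)).append (hρ.of_le ht.le)
      (fun i hi j hj h => by have := hρ.inj _ (by omega) _ (by omega) h; omega)
      (fun _ _ => by rwa [show t + (M - t - 1) = M - 1 by omega]) using 1
    omega
  obtain ⟨j, hj, hjb⟩ := hcyc.exists_eq_of_adj_head (x := b)
    (by rwa [appendSeq_of_lt (by omega), Nat.add_zero])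
  unfold appendSeq at hjb
  split_ifs at hjb
  · exact hb ⟨_, by omega, hjb⟩
  · exact hb ⟨_, by omega, hjb⟩

lemma not_adj_last_of_adj_head_succ (hρ : G.IsLongestPathSeq M ρ) (hconn : G.Connected)
    (hMV : M < Fintype.card V) {j : ℕ} (hj : j + 1 < M) (h : G.Adj (ρ 0) (ρ (j + 1))) :
    ¬ G.Adj (ρ (M - 1)) (ρ j) := by
  have := (hρ.rotate hj h).not_adj_last_head hconn hMV
  rwa [rotateSeq_of_le (by omega), rotateSeq_of_lt (by omega), Nat.add_sub_cancel,
    Nat.sub_zero] at this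

variable [DecidableRel G.Adj]

lemma card_filter_adj_head (hρ : G.IsLongestPathSeq M ρ) :
    #{i ∈ range (M - 1) | G.Adj (ρ 0) (ρ (i + 1))} = G.degree (ρ 0) := by
  refine card_nbij (fun i => ρ (i + 1)) (fun i hi => by simpa using (mem_filter.1 hi).2)
    (fun i hi j hj h => by
      simp only [coe_filter, mem_range, Set.mem_ofPred_eq] at hi hj
      simpa using hρ.inj _ (by omega) _ (by omega) h)
    fun x hx => ?_
  have hx : G.Adj (ρ 0) x := by simpa using hx
  obtain ⟨i, hi, rfl⟩ := hρ.exists_eq_of_adj_head hx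
  have hi0 : i ≠ 0 := by rintro rfl; exact G.irrefl hx
  exact ⟨i - 1, by
    simp only [coe_filter, mem_range, Set.mem_ofPred_eq,
      Nat.sub_add_cancel (Nat.pos_of_ne_zero hi0), hx, and_true]
    omega,
    by simp [Nat.sub_add_cancel (Nat.pos_of_ne_zero hi0)]⟩

lemma card_filter_adj_last (hρ : G.IsLongestPathSeq M ρ) :
    #{i ∈ range (M - 1) | G.Adj (ρ (M - 1)) (ρ i)} = G.degree (ρ (M - 1)) := by
  refine card_nbij ρ (fun i hi => by simpa using (mem_filter.1 hi).2)
    (fun i hi j hj h => by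
      simp only [coe_filter, mem_range, Set.mem_ofPred_eq] at hi hj
      exact hρ.inj _ (by omega) _ (by omega) h)
    fun x hx => ?_
  have hx : G.Adj (ρ (M - 1)) x := by simpa using hx
  obtain ⟨i, hi, rfl⟩ := hρ.exists_eq_of_adj_last hx
  have hiM : i ≠ M - 1 := by rintro rfl; exact G.irrefl hx
  exact ⟨i, by simp only [coe_filter, mem_range, Set.mem_ofPred_eq, hx, and_true]; omega, rfl⟩

/-- The ends of `ρ` see disjoint sets of edges of `ρ`, as otherwise a rotation would close a cycle
through all of `ρ`, which connectivity extends to a longer path. -/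
lemma card_filter_add_degree_add_degree (hρ : G.IsLongestPathSeq M ρ) (hconn : G.Connected)
    (hMV : M < Fintype.card V) :
    #{i ∈ range (M - 1) | ¬ G.Adj (ρ 0) (ρ (i + 1)) ∧ ¬ G.Adj (ρ (M - 1)) (ρ i)} +
      G.degree (ρ 0) + G.degree (ρ (M - 1)) = M - 1 := by
  have hdisj : Disjoint {i ∈ range (M - 1) | G.Adj (ρ 0) (ρ (i + 1))}
      {i ∈ range (M - 1) | G.Adj (ρ (M - 1)) (ρ i)} :=
    disjoint_filter.2 fun i hi h => hρ.not_adj_last_of_adj_head_succ hconn hMV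
      (by have := mem_range.1 hi; omega) h
  rw [← hρ.card_filter_adj_head, ← hρ.card_filter_adj_last, add_assoc,
    ← card_union_of_disjoint hdisj, ← filter_or, add_comm]
  simpa only [not_or, card_range] using card_filter_add_card_filter_not (s := range (M - 1))
    (fun i => G.Adj (ρ 0) (ρ (i + 1)) ∨ G.Adj (ρ (M - 1)) (ρ i))

end IsLongestPathSeq

/-! ### Nearly regular graphs with a clique neighbourhood -/

section NearlyRegular

variable [Fintype V] [DecidableRel G.Adj]

structure IsNearlyRegularOfDegree (G : SimpleGraph V) [DecidableRel G.Adj] (k : ℕ) (u : V) :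
    Prop where
  degree_eq_sub_one : G.degree u = k - 1
  degree_eq : ∀ v, v ≠ u → G.degree v = k

/-- The degree sum `k |V| - 1` is even. -/
lemma IsNearlyRegularOfDegree.odd_card {k : ℕ} {u : V} (hG : G.IsNearlyRegularOfDegree k u)
    (hk : Odd k) : Odd (Fintype.card V) := by
  classical
  have hsum := G.sum_degrees_eq_twice_card_edges
  rw [← add_sum_erase _ _ (mem_univ u), hG.degree_eq_sub_one,
    sum_congr rfl fun v hv => hG.degree_eq v (ne_of_mem_erase hv), sum_const,
    card_erase_of_mem (mem_univ u), card_univ, smul_eq_mul] at hsum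
  obtain ⟨N, hN⟩ := Nat.exists_eq_add_one_of_ne_zero (Fintype.card_pos_iff.2 ⟨u⟩).ne'
  obtain ⟨j, rfl⟩ := hk
  rw [hN] at hsum ⊢
  refine (Nat.odd_mul (n := 2 * j + 1)).1 ⟨#G.edgeFinset, ?_⟩ |>.1
  simp only [Nat.add_sub_cancel] at hsum
  linarith

variable [DecidableEq V] {u x : V}

/-- The closed neighbourhood `N[u]`. -/
def closedNeighborFinset (G : SimpleGraph V) [DecidableRel G.Adj] (u : V) : Finset V :=
  insert u (G.neighborFinset u)

lemma mem_closedNeighborFinset : x ∈ G.closedNeighborFinset u ↔ x = u ∨ G.Adj u x := by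
  simp [closedNeighborFinset]

lemma self_mem_closedNeighborFinset : u ∈ G.closedNeighborFinset u :=
  mem_closedNeighborFinset.2 (Or.inl rfl)

lemma mem_closedNeighborFinset_of_adj (h : G.Adj u x) : x ∈ G.closedNeighborFinset u :=
  mem_closedNeighborFinset.2 (Or.inr h)

lemma ne_of_notMem_closedNeighborFinset (h : x ∉ G.closedNeighborFinset u) : x ≠ u := by
  rintro rfl; exact h self_mem_closedNeighborFinset

lemma ne_of_adj_of_notMem_closedNeighborFinset {y : V} (hy : y ∉ G.closedNeighborFinset u)
    (h : G.Adj x y) : x ≠ u := by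
  rintro rfl; exact hy (mem_closedNeighborFinset_of_adj h)

lemma card_closedNeighborFinset : #(G.closedNeighborFinset u) = G.degree u + 1 := by
  rw [closedNeighborFinset, card_insert_of_notMem (by simp), card_neighborFinset_eq_degree]

lemma isClique_closedNeighborFinset (h : G.IsClique (G.neighborSet u)) :
    G.IsClique (G.closedNeighborFinset u : Set V) := by
  rw [closedNeighborFinset, coe_insert, coe_neighborFinset]
  exact isClique_insert.2 ⟨h, fun _ hb _ => hb⟩

namespace IsNearlyRegularOfDegree

variable {k : ℕ} {γ y : V}

lemma card_closedNeighborFinset (hG : G.IsNearlyRegularOfDegree k u) (hk : 1 ≤ k) :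
    #(G.closedNeighborFinset u) = k := by
  rw [SimpleGraph.card_closedNeighborFinset, hG.degree_eq_sub_one]
  omega

lemma exists_adj_notMem (hG : G.IsNearlyRegularOfDegree k u) (hk : 1 ≤ k)
    (hγ : γ ∈ G.closedNeighborFinset u) (hγu : γ ≠ u) :
    ∃ x ∉ G.closedNeighborFinset u, G.Adj γ x := by
  by_contra! h
  have hsub : G.neighborFinset γ ⊆ (G.closedNeighborFinset u).erase γ := fun z hz => by
    have hz : G.Adj γ z := (G.mem_neighborFinset _ _).1 hz
    exact mem_erase.2 ⟨G.ne_of_adj hz |>.symm, by_contra fun hzS => h z hzS hz⟩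
  have := card_le_card hsub
  rw [card_neighborFinset_eq_degree, hG.degree_eq γ hγu, card_erase_of_mem hγ,
    hG.card_closedNeighborFinset hk] at this
  omega

lemma eq_of_adj_notMem (hG : G.IsNearlyRegularOfDegree k u) (hcl : G.IsClique (G.neighborSet u))
    (hγ : γ ∈ G.closedNeighborFinset u) (hx : x ∉ G.closedNeighborFinset u)
    (hy : y ∉ G.closedNeighborFinset u) (hγx : G.Adj γ x) (hγy : G.Adj γ y) : x = y := by
  by_contra hxy
  have hγu : γ ≠ u := by rintro rfl; exact hx (mem_closedNeighborFinset_of_adj hγx)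
  have hdeg : 1 ≤ G.degree u := by
    rw [← card_neighborFinset_eq_degree, Nat.one_le_iff_ne_zero, Ne, card_eq_zero]
    exact ne_empty_of_mem (by simpa [mem_closedNeighborFinset, hγu] using hγ)
  have hsub : insert x (insert y ((G.closedNeighborFinset u).erase γ)) ⊆ G.neighborFinset γ := by
    intro z hz
    simp only [mem_insert, mem_erase] at hz
    rw [mem_neighborFinset]
    rcases hz with rfl | rfl | ⟨hzγ, hz⟩
    exacts [hγx, hγy, isClique_closedNeighborFinset hcl hγ hz hzγ.symm]
  have := card_le_card hsub
  rw [card_insert_of_notMem (by simp [hxy, hx]),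
    card_insert_of_notMem (fun h => hy (mem_of_mem_erase h)), card_erase_of_mem hγ,
    SimpleGraph.card_closedNeighborFinset, card_neighborFinset_eq_degree, hG.degree_eq γ hγu,
    hG.degree_eq_sub_one] at this
  omega

lemma sub_one_le_degree (hG : G.IsNearlyRegularOfDegree k u) (v : V) : k - 1 ≤ G.degree v := by
  by_cases h : v = u
  · rw [h, hG.degree_eq_sub_one]
  · rw [hG.degree_eq v h]
    omega

variable {M : ℕ} {ρ : ℕ → V}

lemma two_mul_le (hG : G.IsNearlyRegularOfDegree k u) (hconn : G.Connected)
    (hρ : G.IsLongestPathSeq M ρ) (hMV : M < Fintype.card V) (hL : ρ (M - 1) ≠ u) :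
    2 * k ≤ M := by
  have := hρ.card_filter_add_degree_add_degree hconn hMV
  have := hG.sub_one_le_degree (ρ 0)
  rw [hG.degree_eq _ hL] at *
  omega

/-- The positions of `ρ` in `N[u]` where `ρ` enters `N[u]`, leaves it, or which are joined to an
end of `ρ` from inside a run of `N[u]`: each of them exhibits the unique outside neighbour of a
vertex of `N[u] \ {u}`, so there are at most `k - 1` of them. -/
lemma card_entry_add_card_exit_add_card_chord_le
    (hG : G.IsNearlyRegularOfDegree k u) (hcl : G.IsClique (G.neighborSet u)) (hk : 1 ≤ k)
    (hρ : G.IsPathSeq M ρ) (h0 : ρ 0 ∉ G.closedNeighborFinset u)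
    (hL : ρ (M - 1) ∉ G.closedNeighborFinset u) :
    #{p ∈ range M | ρ p ∈ G.closedNeighborFinset u ∧ ρ (p - 1) ∉ G.closedNeighborFinset u} +
      #{p ∈ range M | ρ p ∈ G.closedNeighborFinset u ∧ ρ (p + 1) ∉ G.closedNeighborFinset u} +
      #{p ∈ range M | ρ (p - 1) ∈ G.closedNeighborFinset u ∧ ρ p ∈ G.closedNeighborFinset u ∧
        G.Adj (ρ 0) (ρ p)} +
      #{p ∈ range M | ρ p ∈ G.closedNeighborFinset u ∧ ρ (p + 1) ∈ G.closedNeighborFinset u ∧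
        G.Adj (ρ (M - 1)) (ρ p)} ≤ k - 1 := by
  set S := G.closedNeighborFinset u
  have uniq {p q₁ q₂ : ℕ} (h₁ : q₁ < M) (h₂ : q₂ < M) (hp : ρ p ∈ S) (hq₁ : ρ q₁ ∉ S)
      (hq₂ : ρ q₂ ∉ S) (a₁ : G.Adj (ρ p) (ρ q₁)) (a₂ : G.Adj (ρ p) (ρ q₂)) : q₁ = q₂ :=
    hρ.inj _ h₁ _ h₂ (hG.eq_of_adj_notMem hcl hp hq₁ hq₂ a₁ a₂)
  have inner {p : ℕ} (hp : p < M) (hpS : ρ p ∈ S) : 0 < p ∧ p + 1 < M := by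
    refine ⟨Nat.pos_of_ne_zero ?_, ?_⟩
    · rintro rfl; exact h0 hpS
    · by_contra h; exact hL (by rwa [show M - 1 = p by omega])
  have hsub : {p ∈ range M | ρ p ∈ S ∧ ρ (p - 1) ∉ S} ∪ {p ∈ range M | ρ p ∈ S ∧ ρ (p + 1) ∉ S} ∪
      {p ∈ range M | ρ (p - 1) ∈ S ∧ ρ p ∈ S ∧ G.Adj (ρ 0) (ρ p)} ∪
      {p ∈ range M | ρ p ∈ S ∧ ρ (p + 1) ∈ S ∧ G.Adj (ρ (M - 1)) (ρ p)} ⊆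
      {p ∈ range M | ρ p ∈ S.erase u} := by
    intro p hp
    simp only [mem_union, mem_filter, mem_range, mem_erase] at hp ⊢
    rcases hp with ((⟨hp, hS, h⟩ | ⟨hp, hS, h⟩) | ⟨hp, -, hS, h⟩) | ⟨hp, hS, -, h⟩
    · exact ⟨hp, ne_of_adj_of_notMem_closedNeighborFinset h
        (hρ.adj_sub_one hp (inner hp hS).1), hS⟩
    · exact ⟨hp, ne_of_adj_of_notMem_closedNeighborFinset h (hρ.adj p (inner hp hS).2), hS⟩
    · exact ⟨hp, ne_of_adj_of_notMem_closedNeighborFinset h0 h.symm, hS⟩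
    · exact ⟨hp, ne_of_adj_of_notMem_closedNeighborFinset hL h.symm, hS⟩
  have hA := hρ.card_filter_mem_le (S.erase u)
  rw [card_erase_of_mem self_mem_closedNeighborFinset, hG.card_closedNeighborFinset hk] at hA
  refine le_trans (le_of_eq ?_) ((card_le_card hsub).trans hA)
  rw [card_union_of_disjoint, card_union_of_disjoint, card_union_of_disjoint]
  · refine disjoint_filter.2 fun p hp h₁ h₂ => ?_
    have := inner (mem_range.1 hp) h₁.1
    have := uniq (by omega) (by omega) h₁.1 h₁.2 h₂.2 (hρ.adj_sub_one (mem_range.1 hp) this.1)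
      (hρ.adj p this.2)
    omega
  · refine disjoint_union_left.2 ⟨disjoint_filter.2 fun p _ h₁ h₂ => h₁.2 h₂.1,
      disjoint_filter.2 fun p hp h₁ h₂ => ?_⟩
    have := inner (mem_range.1 hp) h₁.1
    have := uniq (by omega) (by omega) h₁.1 h₁.2 h0 (hρ.adj p this.2) h₂.2.2.symm
    omega
  · refine disjoint_union_left.2 ⟨disjoint_union_left.2 ⟨disjoint_filter.2 fun p hp h₁ h₂ => ?_,
      disjoint_filter.2 fun p _ h₁ h₂ => h₁.2 h₂.2.1⟩, disjoint_filter.2 fun p hp h₁ h₂ => ?_⟩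
    · have := inner (mem_range.1 hp) h₁.1
      have := uniq (by omega) (by omega) h₁.1 h₁.2 hL (hρ.adj_sub_one (mem_range.1 hp) this.1)
        h₂.2.2.symm
      omega
    · have := inner (mem_range.1 hp) h₁.2.1
      have := uniq (by omega) (by omega) h₁.2.1 h0 hL h₁.2.2.symm h₂.2.2.symm
      omega

/-- The ends see `2k` of the at most `2k + 1` edges of `ρ`, so all but one edge inside a run of
`N[u]` is a chord seen by an end; together with the entries and exits of the runs this exhibits more
than the `k - 1` outside neighbours of `N[u] \ {u}`. -/
lemma false_of_subset_of_ends_notMem (hG : G.IsNearlyRegularOfDegree k u)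
    (hcl : G.IsClique (G.neighborSet u)) (hk : 1 ≤ k) (hconn : G.Connected)
    (hρ : G.IsLongestPathSeq M ρ) (hMV : M < Fintype.card V) (hM : M ≤ 2 * k + 2)
    (hS : ∀ γ ∈ G.closedNeighborFinset u, ∃ i < M, ρ i = γ)
    (h0 : ρ 0 ∉ G.closedNeighborFinset u) (hL : ρ (M - 1) ∉ G.closedNeighborFinset u) : False := by
  have hroles := hG.card_entry_add_card_exit_add_card_chord_le hcl hk hρ.toIsPathSeq h0 hL
  have hends := hρ.card_filter_add_degree_add_degree hconn hMV
  rw [hG.degree_eq _ (ne_of_notMem_closedNeighborFinset h0),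
    hG.degree_eq _ (ne_of_notMem_closedNeighborFinset hL)] at hends
  set S := G.closedNeighborFinset u
  set D := {i ∈ range (M - 1) | ρ i ∈ S ∧ ρ (i + 1) ∈ S}
  have hSP : #{p ∈ range M | ρ p ∈ S} = k := by
    rw [hρ.card_filter_mem_eq hS, hG.card_closedNeighborFinset hk]
  have hentry : #{p ∈ range M | ρ p ∈ S ∧ ρ (p - 1) ∉ S} + #D = k := by
    have : #{p ∈ range M | ρ p ∈ S ∧ ρ (p - 1) ∈ S} = #D := by
      rw [card_filter_range_eq_of_not_zero _ (by simp [h0])]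
      simp [D, and_comm]
    rw [← this, card_filter_and_not_add_card_filter_and, hSP]
  have hexit : #{p ∈ range M | ρ p ∈ S ∧ ρ (p + 1) ∉ S} + #D = k := by
    have : #{p ∈ range M | ρ p ∈ S ∧ ρ (p + 1) ∈ S} = #D := by
      rw [card_filter_range_eq_of_not_last _ (by simp [hL])]
    rw [← this, card_filter_and_not_add_card_filter_and, hSP]
  have hI : #{p ∈ range M | ρ (p - 1) ∈ S ∧ ρ p ∈ S ∧ G.Adj (ρ 0) (ρ p)} =
      #{i ∈ D | G.Adj (ρ 0) (ρ (i + 1))} := by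
    rw [card_filter_range_eq_of_not_zero _ (by simp [h0]), filter_filter]
    simp [and_assoc]
  have hJ : #{p ∈ range M | ρ p ∈ S ∧ ρ (p + 1) ∈ S ∧ G.Adj (ρ (M - 1)) (ρ p)} =
      #{i ∈ D | G.Adj (ρ (M - 1)) (ρ i)} := by
    rw [card_filter_range_eq_of_not_last _ (by simp [hL]), filter_filter]
    simp [and_assoc]
  have hcover : #D ≤ #{i ∈ range (M - 1) | ¬ G.Adj (ρ 0) (ρ (i + 1)) ∧ ¬ G.Adj (ρ (M - 1)) (ρ i)}
      + #{i ∈ D | G.Adj (ρ 0) (ρ (i + 1))} + #{i ∈ D | G.Adj (ρ (M - 1)) (ρ i)} := by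
    refine (card_le_card fun i hi => ?_).trans ((card_union_le _ _).trans
      (Nat.add_le_add_right (card_union_le _ _) _))
    simp only [D, mem_union, mem_filter] at hi ⊢
    tauto
  have hfirst : 0 < #{p ∈ range M | ρ p ∈ S ∧ ρ (p - 1) ∉ S} := by
    obtain ⟨i, hi, hiu⟩ := hS u self_mem_closedNeighborFinset
    obtain ⟨p, hp, hpS, hp'⟩ := Nat.exists_and_not_sub_one (fun p => ρ p ∈ S) h0
      ⟨i, hi, hiu ▸ self_mem_closedNeighborFinset⟩
    exact card_pos.2 ⟨p, mem_filter.2 ⟨mem_range.2 hp, hpS, hp'⟩⟩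
  omega

/-- The outside neighbour of `γ` lies on `ρ`, or a detour through the clique would reach it and
beat `ρ`; and it is `ρ t`, or a bridge through the clique would beat `ρ`. -/
lemma adj_of_forall_notMem (hG : G.IsNearlyRegularOfDegree k u)
    (hcl : G.IsClique (G.neighborSet u)) (hk : 1 ≤ k) (hρ : G.IsLongestPathSeq M ρ)
    (hM : M ≤ 2 * k + 2) (hdisj : ∀ i < M, ρ i ∉ G.closedNeighborFinset u) {t : ℕ} (ht : t < M)
    {s : V} (hs : s ∈ G.closedNeighborFinset u) (hts : G.Adj (ρ t) s) {γ : V}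
    (hγ : γ ∈ G.closedNeighborFinset u) (hγu : γ ≠ u) : G.Adj γ (ρ t) := by
  have hSc := hG.card_closedNeighborFinset hk
  have hS := isClique_closedNeighborFinset hcl
  have hst := hρ.add_card_le_of_adj_isClique hS hdisj ht hs hts
  obtain ⟨x, hxS, hγx⟩ := hG.exists_adj_notMem hk hγ hγu
  by_cases hγs : γ = s
  · subst hγs
    rwa [hG.eq_of_adj_notMem hcl hγ hxS (hdisj t ht) hγx hts.symm] at hγx
  obtain ⟨e, he, he0, hek, heS⟩ := hS.exists_isPathSeq hs hγ (Ne.symm hγs)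
  rw [hSc] at he hek heS hst
  have heρ : ∀ i < M, ∀ j < k, ρ i ≠ e j := fun i hi j hj h =>
    hdisj i hi (h ▸ (heS _).2 ⟨j, hj, rfl⟩)
  obtain ⟨j, hj, rfl⟩ : ∃ j < M, ρ j = x := by
    by_contra! hx
    have := hρ.detour ht (he.append (IsPathSeq.single x)
      (fun i hi _ _ h => hxS (h ▸ (heS _).2 ⟨i, hi, rfl⟩)) fun _ _ => hek ▸ hγx)
      (fun i hi j hj h => ?_) (by rwa [appendSeq_of_lt (by omega), he0])
    · omega
    · rcases lt_or_ge j k with hj' | hj'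
      · rw [appendSeq_of_lt hj'] at h
        exact heρ i hi j hj' h
      · rw [appendSeq_of_le hj'] at h
        exact hx i hi h
  have hjγ := hρ.add_card_le_of_adj_isClique hS hdisj hj hγ hγx.symm
  rw [hSc] at hjγ
  rcases lt_trichotomy j t with hjt | rfl | hjt
  · have := hρ.bridge hjt ht he (by omega) heρ (he0 ▸ hts) (hek ▸ hγx)
    omega
  · exact hγx
  · have := hρ.bridge hjt hj he.reverse (by omega) (fun i hi j' _ => heρ i hi _ (by omega))
      (by simpa [hek] using hγx.symm) (by simpa [he0] using hts.symm)
    omega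

lemma false_of_forall_notMem (hG : G.IsNearlyRegularOfDegree k u)
    (hcl : G.IsClique (G.neighborSet u)) (hk : 1 ≤ k) (hconn : G.Connected)
    (hρ : G.IsLongestPathSeq M ρ) (hM : M ≤ 2 * k + 2)
    (hdisj : ∀ i < M, ρ i ∉ G.closedNeighborFinset u) : False := by
  have hSc := hG.card_closedNeighborFinset hk
  have hS := isClique_closedNeighborFinset hcl
  obtain ⟨t, ht, s, hs, hts⟩ :=
    hρ.exists_adj_of_isClique hconn hS self_mem_closedNeighborFinset hdisj (by omega)
  have hst := hρ.add_card_le_of_adj_isClique hS hdisj ht hs hts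
  rw [hSc] at hst
  have hsub : insert (ρ (t - 1)) (insert (ρ (t + 1)) ((G.closedNeighborFinset u).erase u)) ⊆
      G.neighborFinset (ρ t) := by
    intro z hz
    simp only [mem_insert, mem_erase] at hz
    rw [mem_neighborFinset]
    rcases hz with rfl | rfl | ⟨hzu, hz⟩
    · exact hρ.adj_sub_one (by omega) (by omega)
    · exact hρ.adj t (by omega)
    · exact (hG.adj_of_forall_notMem hcl hk hρ hM hdisj ht hs hts hz hzu).symm
  have := card_le_card hsub
  rw [card_insert_of_notMem, card_insert_of_notMem,
    card_erase_of_mem self_mem_closedNeighborFinset, hSc, card_neighborFinset_eq_degree,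
    hG.degree_eq _ (ne_of_notMem_closedNeighborFinset (hdisj t ht))] at this
  · omega
  · exact fun h => hdisj _ (by omega) (mem_of_mem_erase h)
  · simp only [mem_insert, not_or]
    exact ⟨fun h => by have := hρ.inj _ (by omega) _ (by omega) h; omega,
      fun h => hdisj _ (by omega) (mem_of_mem_erase h)⟩

lemma forall_notMem_of_forall_ne (hG : G.IsNearlyRegularOfDegree k u)
    (hcl : G.IsClique (G.neighborSet u)) (hρ : G.IsLongestPathSeq M ρ) {s : V}
    (hs : s ∈ G.closedNeighborFinset u) (hsρ : ∀ i < M, ρ i ≠ s) :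
    ∀ i < M, ρ i ∉ G.closedNeighborFinset u := by
  have hadj : ∀ i < M, ρ i ∈ G.closedNeighborFinset u → G.Adj (ρ i) s := fun i hi h =>
    isClique_closedNeighborFinset hcl h hs (hsρ i hi)
  have hsucc : ∀ i, i + 1 < M → ρ i ∈ G.closedNeighborFinset u →
      ρ (i + 1) ∉ G.closedNeighborFinset u := fun i hi h₁ h₂ => by
    have := hρ.bridge (Nat.lt_succ_self i) hi (IsPathSeq.single s) one_pos
      (fun j hj _ _ => hsρ j hj) (hadj _ hi h₂) (hadj _ (by omega) h₁).symm
    omega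
  intro i hi hiS
  rcases Nat.eq_zero_or_pos i with rfl | hi0
  · obtain ⟨j, hj, hjs⟩ := hρ.exists_eq_of_adj_head (hadj 0 hi hiS)
    exact hsρ j hj hjs
  rcases eq_or_lt_of_le (Nat.le_sub_one_of_lt hi) with rfl | hiM
  · obtain ⟨j, hj, hjs⟩ := hρ.exists_eq_of_adj_last (hadj _ hi hiS)
    exact hsρ j hj hjs
  have h₁ : ρ (i - 1) ∉ G.closedNeighborFinset u := fun h =>
    hsucc (i - 1) (by omega) h (by rwa [Nat.sub_add_cancel hi0])
  have := hG.eq_of_adj_notMem hcl hiS h₁ (hsucc i (by omega) hiS) (hρ.adj_sub_one hi hi0)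
    (hρ.adj i (by omega))
  have := hρ.inj _ (by omega) _ (by omega) this
  omega

lemma false_of_subset_of_adj_head (hG : G.IsNearlyRegularOfDegree k u)
    (hcl : G.IsClique (G.neighborSet u)) (hk : 1 ≤ k) (hconn : G.Connected)
    (hρ : G.IsLongestPathSeq M ρ) (hMV : M < Fintype.card V) (hM : M ≤ 2 * k + 2)
    (hS : ∀ γ ∈ G.closedNeighborFinset u, ∃ i < M, ρ i = γ)
    (hL : ρ (M - 1) ∉ G.closedNeighborFinset u) {j : ℕ} (hj : j < M) (h : G.Adj (ρ 0) (ρ j))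
    (hj' : ρ (j - 1) ∉ G.closedNeighborFinset u) : False := by
  have hj0 : j ≠ 0 := by rintro rfl; exact G.irrefl h
  refine hG.false_of_subset_of_ends_notMem hcl hk hconn (hρ.rotate hj h) hMV hM
    (fun γ hγ => ?_) ?_ ?_
  · obtain ⟨i, hi, rfl⟩ := hS γ hγ
    exact exists_rotateSeq_eq hi hj.le
  · rwa [rotateSeq_of_lt (by omega), Nat.sub_zero]
  · rwa [rotateSeq_of_le (by omega)]

lemma eq_of_adj_of_prefix (hG : G.IsNearlyRegularOfDegree k u)
    (hcl : G.IsClique (G.neighborSet u)) (hk : 1 ≤ k) (hconn : G.Connected)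
    (hρ : G.IsLongestPathSeq M ρ) (hMV : M < Fintype.card V) (hM : M ≤ 2 * k + 2)
    (hkM : k < M) (hpre : ∀ i < k, ρ i ∈ G.closedNeighborFinset u)
    (hsuf : ∀ i, k ≤ i → i < M → ρ i ∉ G.closedNeighborFinset u) {β x : V}
    (hβ : β ∈ G.closedNeighborFinset u)
    (hx : x ∉ G.closedNeighborFinset u) (h : G.Adj β x) : x = ρ k := by
  have hα : G.Adj (ρ (k - 1)) (ρ k) := (hρ.adj_sub_one hkM (by omega)).symm
  by_cases hβα : β = ρ (k - 1)
  · exact hG.eq_of_adj_notMem hcl hβ hx (hsuf k le_rfl hkM) h (hβα ▸ hα)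
  obtain ⟨e, he, he0, hek, heS⟩ :=
    (isClique_closedNeighborFinset hcl).exists_isPathSeq hβ (hpre (k - 1) (by omega)) hβα
  rw [hG.card_closedNeighborFinset hk] at he hek heS
  -- run through `N[u]` from `β` instead, then continue along `ρ`
  have hQ : G.IsLongestPathSeq M (appendSeq k e fun i => ρ (k + i)) := by
    refine ⟨?_, hρ.le⟩
    convert he.append (hρ.shift (s := k) (m' := M - k) (by omega))
      (fun i hi j hj hij => hsuf (k + j) (by omega) (by omega) (hij ▸ (heS _).2 ⟨i, hi, rfl⟩))
      (fun _ _ => by rwa [hek, Nat.add_zero]) using 1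
    omega
  obtain ⟨j, hj, hjx⟩ := hQ.exists_eq_of_adj_head (x := x)
    (by rwa [appendSeq_of_lt (by omega), he0])
  have hjk : k ≤ j := by
    by_contra hjk
    rw [appendSeq_of_lt (by omega)] at hjx
    exact hx (hjx ▸ (heS _).2 ⟨j, by omega, rfl⟩)
  rw [appendSeq_of_le hjk] at hjx
  rcases eq_or_lt_of_le hjk with rfl | hjk
  · simpa using hjx.symm
  refine (hG.false_of_subset_of_adj_head hcl hk hconn hQ hMV hM (fun γ hγ => ?_) ?_ hj ?_ ?_).elim
  · obtain ⟨i, hi, rfl⟩ := (heS γ).1 hγ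
    exact ⟨i, by omega, appendSeq_of_lt hi⟩
  · rw [appendSeq_of_le (by omega)]
    exact hsuf _ (by omega) (by omega)
  · rwa [appendSeq_of_lt (by omega), appendSeq_of_le hjk.le, he0, hjx]
  · rw [appendSeq_of_le (by omega)]
    exact hsuf _ (by omega) (by omega)

lemma neighborFinset_eq_of_prefix (hG : G.IsNearlyRegularOfDegree k u) (hk : 1 ≤ k)
    (hρ : G.IsPathSeq M ρ) (hkM : k + 1 < M)
    (hsuf : ∀ i, k ≤ i → i < M → ρ i ∉ G.closedNeighborFinset u)
    (hext : ∀ β ∈ G.closedNeighborFinset u, ∀ x ∉ G.closedNeighborFinset u, G.Adj β x → x = ρ k) :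
    G.neighborFinset (ρ k) = insert (ρ (k + 1)) ((G.closedNeighborFinset u).erase u) := by
  symm
  refine eq_of_subset_of_card_le (fun z hz => ?_) ?_
  · rw [mem_neighborFinset]
    rcases mem_insert.1 hz with rfl | hz
    · exact hρ.adj k hkM
    obtain ⟨x, hx, hzx⟩ := hG.exists_adj_notMem hk (mem_of_mem_erase hz) (ne_of_mem_erase hz)
    rw [← hext z (mem_of_mem_erase hz) x hx hzx]
    exact hzx.symm
  · rw [card_neighborFinset_eq_degree,
      hG.degree_eq _ (ne_of_notMem_closedNeighborFinset (hsuf k le_rfl (by omega))),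
      card_insert_of_notMem fun h => hsuf (k + 1) (by omega) hkM (mem_of_mem_erase h),
      card_erase_of_mem self_mem_closedNeighborFinset, hG.card_closedNeighborFinset hk]
    omega

lemma neighborFinset_eq_erase_image_of_prefix (hG : G.IsNearlyRegularOfDegree k u)
    (hρ : G.IsPathSeq M ρ) (hpre : ∀ i < k, ρ i ∈ G.closedNeighborFinset u)
    (hsuf : ∀ i, k ≤ i → i < M → ρ i ∉ G.closedNeighborFinset u)
    (hext : ∀ β ∈ G.closedNeighborFinset u, ∀ x ∉ G.closedNeighborFinset u, G.Adj β x → x = ρ k)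
    (hNk : G.neighborFinset (ρ k) = insert (ρ (k + 1)) ((G.closedNeighborFinset u).erase u))
    (hM : M ≤ 2 * k + 2) {j : ℕ} (hj : k + 2 ≤ j) (hjM : j < M)
    (hnb : ∀ z, G.Adj (ρ j) z → ∃ i < M, ρ i = z) :
    M = 2 * k + 2 ∧ G.neighborFinset (ρ j) = ((Icc (k + 1) (2 * k + 1)).image ρ).erase (ρ j) := by
  have hjS := hsuf j (by omega) hjM
  have hsub : G.neighborFinset (ρ j) ⊆ ((Icc (k + 1) (M - 1)).image ρ).erase (ρ j) := by
    intro z hz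
    rw [mem_neighborFinset] at hz
    obtain ⟨i, hi, rfl⟩ := hnb z hz
    refine mem_erase.2 ⟨(G.ne_of_adj hz).symm, mem_image_of_mem _ (mem_Icc.2 ⟨?_, by omega⟩)⟩
    by_contra! hik
    rcases Nat.lt_or_ge i k with hik' | hik'
    · have := hρ.inj _ hjM _ (by omega) (hext _ (hpre i hik') _ hjS hz.symm)
      omega
    · have hmem : ρ j ∈ G.neighborFinset (ρ k) := by
        rw [mem_neighborFinset, show k = i by omega]
        exact hz.symm
      rw [hNk, mem_insert] at hmem
      rcases hmem with h | h
      · have := hρ.inj _ hjM _ (by omega) h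
        omega
      · exact hjS (mem_of_mem_erase h)
  have hcard : #(((Icc (k + 1) (M - 1)).image ρ).erase (ρ j)) = M - 1 - k - 1 := by
    rw [card_erase_of_mem (mem_image_of_mem _ (mem_Icc.2 ⟨by omega, by omega⟩)),
      hρ.card_image_Icc (by omega)]
    omega
  have hdeg : #(G.neighborFinset (ρ j)) = k := by
    rw [card_neighborFinset_eq_degree, hG.degree_eq _ (ne_of_notMem_closedNeighborFinset hjS)]
  have hMeq : M = 2 * k + 2 := by
    have := card_le_card hsub
    omega
  rw [show M - 1 = 2 * k + 1 by omega] at hsub hcard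
  exact ⟨hMeq, eq_of_subset_of_card_le hsub (by omega)⟩

lemma adj_of_prefix (hG : G.IsNearlyRegularOfDegree k u) (hρ : G.IsLongestPathSeq M ρ)
    (hpre : ∀ i < k, ρ i ∈ G.closedNeighborFinset u)
    (hsuf : ∀ i, k ≤ i → i < M → ρ i ∉ G.closedNeighborFinset u)
    (hext : ∀ β ∈ G.closedNeighborFinset u, ∀ x ∉ G.closedNeighborFinset u, G.Adj β x → x = ρ k)
    (hNk : G.neighborFinset (ρ k) = insert (ρ (k + 1)) ((G.closedNeighborFinset u).erase u))
    (hM : M ≤ 2 * k + 2) {j : ℕ} (hj : k + 2 ≤ j) (hjM : j < M) : G.Adj (ρ j) (ρ (k + 1)) := by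
  have hB := fun j hj hjM hnb => hG.neighborFinset_eq_erase_image_of_prefix
    hρ.toIsPathSeq hpre hsuf hext hNk hM (j := j) hj hjM hnb
  obtain ⟨hMeq, hlast⟩ := hB (M - 1) (by omega) (by omega) fun z hz => hρ.exists_eq_of_adj_last hz
  have hnb : ∀ z, G.Adj (ρ j) z → ∃ i < M, ρ i = z := by
    rcases eq_or_lt_of_le (Nat.le_sub_one_of_lt hjM) with rfl | hj'
    · exact fun z hz => hρ.exists_eq_of_adj_last hz
    have hmem : ρ (j - 1) ∈ G.neighborFinset (ρ (M - 1)) := hlast ▸ mem_erase.2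
      ⟨fun h => by have := hρ.inj _ (by omega) _ (by omega) h; omega,
        mem_image_of_mem _ (mem_Icc.2 ⟨by omega, by omega⟩)⟩
    exact fun z hz => hρ.exists_eq_of_adj_of_adj_last (by omega)
      ((mem_neighborFinset _ _ _).1 hmem) (by rwa [Nat.sub_add_cancel (by omega : 1 ≤ j)])
  have : ρ (k + 1) ∈ G.neighborFinset (ρ j) := (hB j hj hjM hnb).2 ▸ mem_erase.2
    ⟨fun h => by have := hρ.inj _ (by omega) _ (by omega) h; omega,
      mem_image_of_mem _ (mem_Icc.2 ⟨le_rfl, by omega⟩)⟩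
  rwa [mem_neighborFinset] at this

lemma false_of_prefix (hG : G.IsNearlyRegularOfDegree k u)
    (hcl : G.IsClique (G.neighborSet u)) (hk : 3 ≤ k) (hconn : G.Connected)
    (hρ : G.IsLongestPathSeq M ρ) (hMV : M < Fintype.card V) (hM : M ≤ 2 * k + 2)
    (hkM : k < M) (hpre : ∀ i < k, ρ i ∈ G.closedNeighborFinset u)
    (hsuf : ∀ i, k ≤ i → i < M → ρ i ∉ G.closedNeighborFinset u) : False := by
  have hext : ∀ β ∈ G.closedNeighborFinset u, ∀ x ∉ G.closedNeighborFinset u, G.Adj β x →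
      x = ρ k := fun β hβ x hx h =>
    hG.eq_of_adj_of_prefix hcl (by omega) hconn hρ hMV hM hkM hpre hsuf hβ hx h
  have hM2k := hG.two_mul_le hconn hρ hMV
    (ne_of_notMem_closedNeighborFinset (hsuf (M - 1) (by omega) (by omega)))
  have hNk := hG.neighborFinset_eq_of_prefix (by omega) hρ.toIsPathSeq (by omega) hsuf hext
  have hMeq := (hG.neighborFinset_eq_erase_image_of_prefix hρ.toIsPathSeq hpre hsuf hext hNk hM
    (j := M - 1) (by omega) (by omega) fun z hz => hρ.exists_eq_of_adj_last hz).1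
  have hsub : ((Icc k (2 * k + 1)).image ρ).erase (ρ (k + 1)) ⊆ G.neighborFinset (ρ (k + 1)) := by
    intro z hz
    obtain ⟨hz, i, hi, rfl⟩ : z ≠ ρ (k + 1) ∧ ∃ i ∈ Icc k (2 * k + 1), ρ i = z := by
      simpa using hz
    rw [mem_Icc] at hi
    rw [mem_neighborFinset]
    rcases Nat.lt_or_ge i (k + 2) with hi' | hi'
    · rw [show i = k by by_contra h; exact hz (by rw [show i = k + 1 by omega])]
      exact (hρ.adj k (by omega)).symm
    · exact (hG.adj_of_prefix hρ hpre hsuf hext hNk hM hi' (by omega)).symm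
  have := card_le_card hsub
  rw [card_erase_of_mem (mem_image_of_mem _ (mem_Icc.2 ⟨by omega, by omega⟩)),
    hρ.toIsPathSeq.card_image_Icc (by omega), card_neighborFinset_eq_degree,
    hG.degree_eq _ (ne_of_notMem_closedNeighborFinset (hsuf (k + 1) (by omega) (by omega)))]
    at this
  omega

lemma false_of_subset_of_last_notMem (hG : G.IsNearlyRegularOfDegree k u)
    (hcl : G.IsClique (G.neighborSet u)) (hk : 3 ≤ k) (hconn : G.Connected)
    (hρ : G.IsLongestPathSeq M ρ) (hMV : M < Fintype.card V) (hM : M ≤ 2 * k + 2)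
    (hS : ∀ γ ∈ G.closedNeighborFinset u, ∃ i < M, ρ i = γ)
    (hL : ρ (M - 1) ∉ G.closedNeighborFinset u) : False := by
  by_cases h0 : ρ 0 ∈ G.closedNeighborFinset u
  swap
  · exact hG.false_of_subset_of_ends_notMem hcl (by omega) hconn hρ hMV hM hS h0 hL
  by_cases hdown : ∀ j < M, ρ j ∈ G.closedNeighborFinset u → ρ (j - 1) ∈ G.closedNeighborFinset u
  · obtain ⟨hpre, hsuf⟩ := forall_lt_and_forall_le_not_of_card_filter
      (fun i => ρ i ∈ G.closedNeighborFinset u) hdown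
      ((hρ.card_filter_mem_eq hS).trans (hG.card_closedNeighborFinset (by omega)))
    have hkM : k < M := by
      by_contra
      exact hL (hpre (M - 1) (by omega))
    exact hG.false_of_prefix hcl hk hconn hρ hMV hM hkM hpre hsuf
  push Not at hdown
  obtain ⟨j, hj, hjS, hj'⟩ := hdown
  have hj0 : ρ 0 ≠ ρ j := fun h => by
    obtain rfl := hρ.inj 0 (by omega) j hj h
    exact hj' h0
  exact hG.false_of_subset_of_adj_head hcl (by omega) hconn hρ hMV hM hS hL hj
    (isClique_closedNeighborFinset hcl h0 hjS hj0) hj'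

lemma false_of_subset (hG : G.IsNearlyRegularOfDegree k u)
    (hcl : G.IsClique (G.neighborSet u)) (hk : 3 ≤ k) (hconn : G.Connected)
    (hρ : G.IsLongestPathSeq M ρ) (hMV : M < Fintype.card V) (hM : M ≤ 2 * k + 2)
    (hS : ∀ γ ∈ G.closedNeighborFinset u, ∃ i < M, ρ i = γ) : False := by
  by_cases hL : ρ (M - 1) ∈ G.closedNeighborFinset u
  swap
  · exact hG.false_of_subset_of_last_notMem hcl hk hconn hρ hMV hM hS hL
  have hkM : k ≤ M := by
    have := card_filter_le (range M) fun p => ρ p ∈ G.closedNeighborFinset u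
    rwa [hρ.card_filter_mem_eq hS, hG.card_closedNeighborFinset (by omega), card_range] at this
  by_cases h0 : ρ 0 ∈ G.closedNeighborFinset u
  · refine hρ.not_adj_last_head hconn hMV (isClique_closedNeighborFinset hcl hL h0 fun h => ?_)
    have := hρ.inj _ (by omega) _ (by omega) h
    omega
  refine hG.false_of_subset_of_last_notMem hcl hk hconn hρ.reverse hMV hM (fun γ hγ => ?_)
    (by simpa using h0)
  obtain ⟨i, hi, rfl⟩ := hS γ hγ
  exact ⟨M - 1 - i, by omega, by rw [show M - 1 - (M - 1 - i) = i by omega]⟩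

theorem two_mul_add_three_le_of_isLongestPathSeq (hG : G.IsNearlyRegularOfDegree k u)
    (hcl : G.IsClique (G.neighborSet u)) (hk : 3 ≤ k) (hconn : G.Connected)
    (hρ : G.IsLongestPathSeq M ρ) (hV : 2 * k + 3 ≤ Fintype.card V) : 2 * k + 3 ≤ M := by
  by_contra! hM
  by_cases hS : ∀ γ ∈ G.closedNeighborFinset u, ∃ i < M, ρ i = γ
  · exact hG.false_of_subset hcl hk hconn hρ (by omega) (by omega) hS
  push Not at hS
  obtain ⟨s, hs, hsρ⟩ := hS
  exact hG.false_of_forall_notMem hcl (by omega) hconn hρ (by omega)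
    (hG.forall_notMem_of_forall_ne hcl hρ hs hsρ)

end IsNearlyRegularOfDegree

end NearlyRegular

end SimpleGraph

lemma gdeg_eq_degree {V : Type*} [Fintype V] (G : SimpleGraph V) [DecidableRel G.Adj] (v : V) :
    gdeg G v = G.degree v := by
  rw [gdeg, degree, neighborFinset, Set.ncard_eq_toFinset_card']

/-- a connected nearly `k`-regular graph (`k ≥ 3` odd) on `n > 2k+1`
vertices in which the neighbors of the vertex of degree `k-1` induce a clique
contains a path on `2k+3` vertices. -/
theorem nearly_regular_clique_neighborhood_path
    (k n : ℕ) (hko : Odd k) (hk : 3 ≤ k) (hn : 2 * k + 1 < n)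
    (G : SimpleGraph (Fin n)) (hconn : G.Connected)
    (u : Fin n) (hu : gdeg G u = k - 1)
    (hreg : ∀ v, v ≠ u → gdeg G v = k)
    (hclique : ∀ x ∈ G.neighborSet u, ∀ y ∈ G.neighborSet u, x ≠ y → G.Adj x y) :
    ContainsCopy (pathGraph (2 * k + 3)) G := by
  classical
  have hG : G.IsNearlyRegularOfDegree k u :=
    ⟨gdeg_eq_degree G u ▸ hu, fun v hv => gdeg_eq_degree G v ▸ hreg v hv⟩
  have hn' : 2 * k + 3 ≤ n := by
    obtain ⟨m, rfl⟩ : Odd n := by simpa using hG.odd_card hko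
    omega
  have : Nonempty (Fin n) := ⟨u⟩
  obtain ⟨M, ρ, hρ⟩ := G.exists_isLongestPathSeq
  exact hρ.containsCopy_pathGraph
    (hG.two_mul_add_three_le_of_isLongestPathSeq hclique hk hconn hρ (by simpa using hn'))
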